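/- arXiv:1311.6698 — 2 statements merged into one kernel-verified Lean document; each statement's English description precedes it below -/
import Mathlib

section
/- Let X be a complex Banach space and let T : 𝒟(T) ⊆ X → X be a closed, densely defined linear operator with nonempty resolvent set such that Re⟨Tx, x*⟩ ≤ 0 for each x ∈ 𝒟(T) and each x* ∈ J(x). Let ω > 0 and let g ∈ Hol(B, B_ω), i.e. g is holomorphic on B with ‖g(x)‖ < ω for all x ∈ B. Then the map h = T + g, defined on D = 𝒟(T) ∩ B, is ω-dissipative. -/
open Filter Topology Metric Set

noncomputable section

/-- `J(x) = {x* ∈ X* : ⟨x, x*⟩ = ‖x‖² = ‖x*‖²}`. -/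
def Jset {X : Type*} [NormedAddCommGroup X] [NormedSpace ℂ X] (x : X) :
    Set (X →L[ℂ] ℂ) :=
  {f | f x = ((‖x‖ ^ 2 : ℝ) : ℂ) ∧ ‖f‖ ^ 2 = ‖x‖ ^ 2}

/-- `Φ` is the Abel average `Φ_α = (I − αh)⁻¹ ∘ ((1 − αω)I)` of `h : D → X`:
for every `x` in the unit ball `B`, `Φ x` is the unique `y ∈ D` with
`y − α h(y) = (1 − αω) x`. -/
def IsAbelAvg {X : Type*} [NormedAddCommGroup X] [NormedSpace ℂ X]
    (D : Set X) (h : X → X) (ω α : ℝ) (Φ : X → X) : Prop :=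
  ∀ x ∈ ball (0 : X) 1,
    Φ x ∈ D ∧ Φ x - (α : ℂ) • h (Φ x) = (((1 - α * ω : ℝ) : ℂ)) • x ∧
      ∀ y ∈ D, y - (α : ℂ) • h y = (((1 - α * ω : ℝ) : ℂ)) • x → y = Φ x

/-- `h : D → X` is `ω`-pseudo-contractive: for some `δ > 0` and every `α ∈ (0, δ)`
the Abel average `Φ_α` is well defined on all of `B` and lies in `Hol(B, D)`. -/
def PseudoContr {X : Type*} [NormedAddCommGroup X] [NormedSpace ℂ X]
    (D : Set X) (h : X → X) (ω : ℝ) : Prop :=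
  ∃ δ > 0, ∀ α ∈ Set.Ioo (0 : ℝ) δ,
    ∃ Φ : X → X, IsAbelAvg D h ω α Φ ∧ DifferentiableOn ℂ Φ (ball (0 : X) 1)

/-- `h : D → X` is `ω`-dissipative. -/
def OmegaDissip {X : Type*} [NormedAddCommGroup X] [NormedSpace ℂ X]
    (D : Set X) (h : X → X) (ω : ℝ) : Prop :=
  ∃ ε > 0, ∃ ς : ℝ, ∀ x ∈ D, 1 - ε < ‖x‖ → ‖x‖ < 1 →
    ∀ f ∈ Jset x, (f (h x)).re ≤ ω * ‖x‖ ^ 2 + ς * (1 - ‖x‖ ^ 2)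

/-- `h` is closed in the weak topology on `D`. -/
def WeaklyClosedOn {X : Type*} [NormedAddCommGroup X] [NormedSpace ℂ X]
    (D : Set X) (h : X → X) : Prop :=
  ∀ (u : ℕ → X) (x y : X), (∀ n, u n ∈ D) → x ∈ D →
    Tendsto u atTop (nhds x) →
    (∀ f : X →L[ℂ] ℂ, Tendsto (fun n => f (h (u n))) atTop (nhds (f y))) →
    h x = y

/-- `X` is weakly sequentially complete. -/
def WeaklySeqComplete (X : Type*) [NormedAddCommGroup X] [NormedSpace ℂ X] : Prop :=
  ∀ u : ℕ → X, (∀ f : X →L[ℂ] ℂ, ∃ c : ℂ, Tendsto (fun n => f (u n)) atTop (nhds c)) →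
    ∃ y : X, ∀ f : X →L[ℂ] ℂ, Tendsto (fun n => f (u n)) atTop (nhds (f y))

/-- `h` has unit radius of boundedness. -/
def UnitRadiusBdd {X : Type*} [NormedAddCommGroup X] (h : X → X) : Prop :=
  ∀ r ∈ Set.Ioo (0 : ℝ) 1, ∃ M : ℝ, ∀ x : X, ‖x‖ ≤ r → ‖h x‖ ≤ M

/-- The numerical radius `L(h) = limsup_{s→1⁻} sup Re N(h_s)` (valued in `EReal`). -/
def numRad {X : Type*} [NormedAddCommGroup X] [NormedSpace ℂ X] (h : X → X) : EReal :=
  Filter.limsup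
    (fun s : ℝ =>
      sSup {r : EReal | ∃ (x : X) (f : X →L[ℂ] ℂ), ‖x‖ = 1 ∧ f ∈ Jset x ∧
        r = ((f (h ((s : ℂ) • x))).re : EReal)})
    (nhdsWithin (1 : ℝ) (Set.Ioo 0 1))

/-- `Q_ω = [0, 1/ω)` for `ω > 0`, `Q_0 = [0, ∞)`, `Q_ω = (−∞, 1/ω) ∪ [0, ∞)` for `ω < 0`. -/
def Qset (ω : ℝ) : Set ℝ :=
  if 0 < ω then Set.Ico 0 (1 / ω)
  else if ω < 0 then Set.Iio (1 / ω) ∪ Set.Ici 0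
  else Set.Ici 0

theorem norm_eq_of_mem_Jset {X : Type*} [NormedAddCommGroup X] [NormedSpace ℂ X]
    {x : X} {f : X →L[ℂ] ℂ} (hf : f ∈ Jset x) : ‖f‖ = ‖x‖ :=
  (pow_left_inj₀ (norm_nonneg f) (norm_nonneg x) two_ne_zero).mp hf.2

theorem re_apply_le_of_mem_Jset {X : Type*} [NormedAddCommGroup X] [NormedSpace ℂ X]
    {x : X} {f : X →L[ℂ] ℂ} (hf : f ∈ Jset x) (y : X) : (f y).re ≤ ‖x‖ * ‖y‖ :=
  calc (f y).re ≤ ‖f y‖ := Complex.re_le_norm _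
    _ ≤ ‖f‖ * ‖y‖ := f.le_opNorm y
    _ = ‖x‖ * ‖y‖ := by rw [norm_eq_of_mem_Jset hf]

theorem stmt13_general {X : Type*} [NormedAddCommGroup X] [NormedSpace ℂ X]
    (T : X →ₗ.[ℂ] X)
    (hTdiss : ∀ x : T.domain, ∀ f ∈ Jset (x : X), (f (T x)).re ≤ 0)
    (ω : ℝ)
    (g : X → X)
    (gbdd : ∀ x ∈ ball (0 : X) 1, ‖g x‖ < ω) :
    ∃ ε > 0, ∃ ς : ℝ, ∀ (x : X) (hx : x ∈ T.domain), ‖x‖ < 1 → 1 - ε < ‖x‖ →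
      ∀ f ∈ Jset x,
        (f (T ⟨x, hx⟩ + g x)).re ≤ ω * ‖x‖ ^ 2 + ς * (1 - ‖x‖ ^ 2) := by
  -- With `ς = ω` the bound is the constant `ω`, which `Re⟨g x, x*⟩ ≤ ‖x‖ ‖g x‖ < ω` beats
  -- on the whole ball.
  refine ⟨1, one_pos, ω, fun x hx hx1 _ f hf => ?_⟩
  have hgx : ‖g x‖ < ω := gbdd x (mem_ball_zero_iff.mpr hx1)
  calc (f (T ⟨x, hx⟩ + g x)).re = (f (T ⟨x, hx⟩)).re + (f (g x)).re := by
        rw [map_add, Complex.add_re]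
    _ ≤ 0 + ‖x‖ * ‖g x‖ := add_le_add (hTdiss ⟨x, hx⟩ f hf) (re_apply_le_of_mem_Jset hf _)
    _ ≤ ω := by nlinarith [norm_nonneg x, norm_nonneg (g x)]
    _ = ω * ‖x‖ ^ 2 + ω * (1 - ‖x‖ ^ 2) := by ring

/-- Proposition `E1as`: let `T : 𝒟(T) ⊆ X → X` be a closed, densely
defined linear operator with nonempty resolvent set satisfying `Re⟨Tx, x*⟩ ≤ 0` for all
`x ∈ 𝒟(T)`, `x* ∈ J(x)`, and let `g ∈ Hol(B, B_ω)` for some `ω > 0`. Then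
`h = T + g`, defined on `D = 𝒟(T) ∩ B`, is `ω`-dissipative. -/
theorem stmt13 {X : Type*} [NormedAddCommGroup X] [NormedSpace ℂ X] [CompleteSpace X]
    (T : X →ₗ.[ℂ] X)
    (hTclosed : IsClosed (T.graph : Set (X × X)))
    (hTdense : Dense (T.domain : Set X))
    (hTres : ∃ (lam : ℂ) (R : X →L[ℂ] X),
      (∀ y : X, ∃ hy : R y ∈ T.domain, lam • R y - T ⟨R y, hy⟩ = y) ∧
      (∀ x : T.domain, R (lam • (x : X) - T x) = (x : X)))
    (hTdiss : ∀ x : T.domain, ∀ f ∈ Jset (x : X), (f (T x)).re ≤ 0)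
    (ω : ℝ) (hω : 0 < ω)
    (g : X → X) (ghol : DifferentiableOn ℂ g (ball (0 : X) 1))
    (gbdd : ∀ x ∈ ball (0 : X) 1, ‖g x‖ < ω) :
    ∃ ε > 0, ∃ ς : ℝ, ∀ (x : X) (hx : x ∈ T.domain), ‖x‖ < 1 → 1 - ε < ‖x‖ →
      ∀ f ∈ Jset x,
        (f (T ⟨x, hx⟩ + g x)).re ≤ ω * ‖x‖ ^ 2 + ς * (1 - ‖x‖ ^ 2) :=
  stmt13_general T hTdiss ω g gbdd

end
end

section
/- Let X be a complex Banach space, h ∈ Hol(B, X) with h(0) = 0, ω ∈ ℝ, and α ∈ ℝ \ {0} with αω ≠ 1. Suppose that 1/α ∉ σ(h′(0)) and that the Abel average Φ_α is well defined and belongs to Hol(B). Then Ker(I − Φ_α′(0)) = Ker(ωI − h′(0)) and Im(I − Φ_α′(0)) = Im(ωI − h′(0)), where Φ_α′(0) denotes the Fréchet derivative of Φ_α at 0. -/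
/-!
Differentiating `Φ x - α h (Φ x) = (1 - αω) x` at `0`, where `Φ 0 = 0`, gives
`U Φ'(0) = (1 - αω) I` with `U = I - α h'(0)`, which is invertible because `1/α ∉ σ(h'(0))`.
Hence `Φ'(0) = (1 - αω) U⁻¹`, so `I - Φ'(0)` equals both `U⁻¹ (U - (1 - αω) I)` and
`(U - (1 - αω) I) U⁻¹`, where `U - (1 - αω) I = α (ωI - h'(0))`.
An invertible factor on the left does not change the kernel, one on the right does not change
the range.
-/

open Filter Topology Metric Set

noncomputable section

theorem isUnit_one_sub_smul_of_inv_notMem_spectrum {𝕜 R : Type*} [Field 𝕜] [Ring R] [Algebra 𝕜 R]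
    {a : R} {α : 𝕜} (hα : α ≠ 0) (ha : α⁻¹ ∉ spectrum 𝕜 a) : IsUnit (1 - α • a) := by
  rw [spectrum.notMem_iff, Algebra.algebraMap_eq_smul_one] at ha
  have hsmul : 1 - α • a = Units.mk0 α hα • (α⁻¹ • 1 - a) := by
    rw [Units.smul_mk0, smul_sub, smul_smul, mul_inv_cancel₀ hα, one_smul]
  rw [hsmul, isUnit_smul_iff]
  exact ha

theorem one_sub_eq_units_inv_mul_and_mul_units_inv {𝕜 R : Type*} [Field 𝕜] [Ring R] [Algebra 𝕜 R]
    {H A : R} {α ω : 𝕜} (u : Rˣ) (hu : (u : R) = 1 - α • H) (hA : ↑u * A = (1 - α * ω) • 1) :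
    1 - A = ↑u⁻¹ * (α • (ω • 1 - H)) ∧ 1 - A = (α • (ω • 1 - H)) * ↑u⁻¹ := by
  have hdiff : α • (ω • 1 - H) = ↑u - (1 - α * ω) • (1 : R) := by
    rw [hu]; module
  have hAinv : A = (1 - α * ω) • (↑u⁻¹ : R) := by
    rw [← u.inv_mul_cancel_left A, hA, mul_smul_comm, mul_one]
  constructor
  · rw [hdiff, mul_sub, u.inv_mul, mul_smul_comm, mul_one, hAinv]
  · rw [hdiff, sub_mul, u.mul_inv, smul_mul_assoc, one_mul, hAinv]

section Operators

variable {𝕜 E : Type*} [NontriviallyNormedField 𝕜] [NormedAddCommGroup E] [NormedSpace 𝕜 E]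

theorem ContinuousLinearMap.ker_units_inv_mul (u : (E →L[𝕜] E)ˣ) (T : E →L[𝕜] E) :
    LinearMap.ker ((↑u⁻¹ * T : E →L[𝕜] E) : E →ₗ[𝕜] E) = LinearMap.ker (T : E →ₗ[𝕜] E) :=
  LinearMap.ker_comp_of_ker_eq_bot _
    (LinearMap.ker_eq_bot_of_injective (ContinuousLinearEquiv.unitsEquiv 𝕜 E u⁻¹).injective)

theorem ContinuousLinearMap.range_mul_units_inv (u : (E →L[𝕜] E)ˣ) (T : E →L[𝕜] E) :
    LinearMap.range ((T * ↑u⁻¹ : E →L[𝕜] E) : E →ₗ[𝕜] E) = LinearMap.range (T : E →ₗ[𝕜] E) :=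
  LinearMap.range_comp_of_range_eq_top _
    (LinearMap.range_eq_top_of_surjective _ (ContinuousLinearEquiv.unitsEquiv 𝕜 E u⁻¹).surjective)

end Operators

namespace IsAbelAvg

variable {X : Type*} [NormedAddCommGroup X] [NormedSpace ℂ X] {D : Set X} {h Φ : X → X} {ω α : ℝ}

theorem apply_zero (hΦ : IsAbelAvg D h ω α Φ) (h0 : h 0 = 0) (hD : 0 ∈ D) : Φ 0 = 0 :=
  ((hΦ 0 (mem_ball_self one_pos)).2.2 0 hD (by simp [h0])).symm

theorem one_sub_smul_fderiv_mul_fderiv (hΦ : IsAbelAvg D h ω α Φ) (h0 : h 0 = 0) (hD : 0 ∈ D)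
    (dh : DifferentiableAt ℂ h 0) (dΦ : DifferentiableAt ℂ Φ 0) :
    (1 - (α : ℂ) • fderiv ℂ h 0) * fderiv ℂ Φ 0 = (1 - (α : ℂ) * ω) • 1 := by
  have dh' : HasFDerivAt h (fderiv ℂ h 0) (Φ 0) := by
    rw [hΦ.apply_zero h0 hD]; exact dh.hasFDerivAt
  have hlhs := dΦ.hasFDerivAt.sub ((dh'.comp 0 dΦ.hasFDerivAt).const_smul (α : ℂ))
  have hrhs : HasFDerivAt (fun x : X => ((1 - α * ω : ℝ) : ℂ) • x)
      (((1 - α * ω : ℝ) : ℂ) • 1 : X →L[ℂ] X) 0 :=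
    (hasFDerivAt_id 0).const_smul _
  have heq : (fun x => Φ x - (α : ℂ) • h (Φ x)) =ᶠ[𝓝 0] fun x => ((1 - α * ω : ℝ) : ℂ) • x :=
    eventually_of_mem (ball_mem_nhds 0 one_pos) fun x hx => (hΦ x hx).2.1
  rw [sub_mul, one_mul, smul_mul_assoc]
  exact_mod_cast hlhs.unique (hrhs.congr_of_eventuallyEq heq)

end IsAbelAvg

theorem stmt15_general {X : Type*} [NormedAddCommGroup X] [NormedSpace ℂ X]
    (h : X → X) (hhol : DifferentiableOn ℂ h (ball (0 : X) 1)) (h0 : h 0 = 0)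
    (ω α : ℝ) (hα : α ≠ 0)
    (hspec : ((α : ℂ)⁻¹) ∉ spectrum ℂ (fderiv ℂ h 0))
    (Φ : X → X) (hΦ : IsAbelAvg (ball (0 : X) 1) h ω α Φ)
    (hΦhol : DifferentiableOn ℂ Φ (ball (0 : X) 1)) :
    LinearMap.ker ((ContinuousLinearMap.id ℂ X - fderiv ℂ Φ 0 : X →L[ℂ] X) : X →ₗ[ℂ] X) =
      LinearMap.ker (((ω : ℂ) • ContinuousLinearMap.id ℂ X - fderiv ℂ h 0 : X →L[ℂ] X) : X →ₗ[ℂ] X) ∧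
    LinearMap.range ((ContinuousLinearMap.id ℂ X - fderiv ℂ Φ 0 : X →L[ℂ] X) : X →ₗ[ℂ] X) =
      LinearMap.range (((ω : ℂ) • ContinuousLinearMap.id ℂ X - fderiv ℂ h 0 : X →L[ℂ] X) : X →ₗ[ℂ] X) := by
  have hα' : (α : ℂ) ≠ 0 := by exact_mod_cast hα
  have h0B : (0 : X) ∈ ball (0 : X) 1 := mem_ball_self one_pos
  obtain ⟨u, hu⟩ := isUnit_one_sub_smul_of_inv_notMem_spectrum hα' hspec
  have hderiv := hΦ.one_sub_smul_fderiv_mul_fderiv h0 h0B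
    (hhol.differentiableAt (isOpen_ball.mem_nhds h0B))
    (hΦhol.differentiableAt (isOpen_ball.mem_nhds h0B))
  obtain ⟨hleft, hright⟩ := one_sub_eq_units_inv_mul_and_mul_units_inv u hu (by rwa [hu])
  rw [← ContinuousLinearMap.one_def]
  refine ⟨?_, ?_⟩
  · rw [hleft, ContinuousLinearMap.ker_units_inv_mul, ContinuousLinearMap.toLinearMap_smul,
      LinearMap.ker_smul _ _ hα']
  · rw [hright, ContinuousLinearMap.range_mul_units_inv, ContinuousLinearMap.toLinearMap_smul,
      LinearMap.range_smul _ _ hα']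

/-- equations (19) in the proof of Theorem `3tm`: under the same
hypotheses as Statement 14, `Ker(I − Φ_α′(0)) = Ker(ωI − h′(0))` and
`Im(I − Φ_α′(0)) = Im(ωI − h′(0))`. -/
theorem stmt15 {X : Type*} [NormedAddCommGroup X] [NormedSpace ℂ X] [CompleteSpace X]
    (h : X → X) (hhol : DifferentiableOn ℂ h (ball (0 : X) 1)) (h0 : h 0 = 0)
    (ω α : ℝ) (hα : α ≠ 0) (hαω : α * ω ≠ 1)
    (hspec : ((α : ℂ)⁻¹) ∉ spectrum ℂ (fderiv ℂ h 0))
    (Φ : X → X) (hΦ : IsAbelAvg (ball (0 : X) 1) h ω α Φ)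
    (hΦhol : DifferentiableOn ℂ Φ (ball (0 : X) 1)) :
    LinearMap.ker ((ContinuousLinearMap.id ℂ X - fderiv ℂ Φ 0 : X →L[ℂ] X) : X →ₗ[ℂ] X) =
      LinearMap.ker (((ω : ℂ) • ContinuousLinearMap.id ℂ X - fderiv ℂ h 0 : X →L[ℂ] X) : X →ₗ[ℂ] X) ∧
    LinearMap.range ((ContinuousLinearMap.id ℂ X - fderiv ℂ Φ 0 : X →L[ℂ] X) : X →ₗ[ℂ] X) =
      LinearMap.range (((ω : ℂ) • ContinuousLinearMap.id ℂ X - fderiv ℂ h 0 : X →L[ℂ] X) : X →ₗ[ℂ] X) :=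
  stmt15_general h hhol h0 ω α hα hspec Φ hΦ hΦhol

end
end
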